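/- Let u : ℝ × ℝ² → ℝ be smooth with ∂_t u ≠ 1 at a point p, set V = 1 − ∂_t u, A₁ = −∂_{x₂}u, A₂ = ∂_{x₁}u, u_z = (∂_{x₁}u − i∂_{x₂}u)/2, u_{z̄} = (∂_{x₁}u + i∂_{x₂}u)/2, all evaluated at p, and let B be the complex-bilinear extension of the metric g_{(V,A)} = −V^{−1}(ds + A₁dx₁ + A₂dx₂)² + V(−dt² + dx₁² + dx₂²) to ℂ⁴, i.e. B(X,Y) = −V^{−1}(X₀ + A₁X₂ + A₂X₃)(Y₀ + A₁Y₂ + A₂Y₃) + V(−X₁Y₁ + X₂Y₂ + X₃Y₃) for X, Y ∈ ℂ⁴ with coordinates ordered as (∂_s, ∂_t, ∂_{x₁}, ∂_{x₂}). Then for every ω ∈ ℂ, the vectors μ₁ = (−i(V − 2ω u_z), −1, ω, −iω) and μ₂ = (i(ωV − 2u_{z̄}), −ω, 1, i) satisfy B(μ_j, μ_k) = 0 for all j, k ∈ {1,2}; in particular the complex span of μ₁, μ₂ is totally null for g_{(V,A)}. -/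

import Mathlib

/-!
On the span of `μ₁, μ₂` both parts of `g_{(V,A)} = -V⁻¹ α² + V η` are squares of one linear
functional `c` with `c(μ₁) = -i`, `c(μ₂) = iω`: the connection form is `α = V c` (the `u_z`,
`u_{z̄}` terms of the `∂_s`-components cancel against `A₁ dx₁ + A₂ dx₂`) and the flat metric is
`η = c ⊗ c`. Hence `g = -V⁻¹ (V c)² + V c² = 0` there.
-/

open Complex

namespace GibbonsHawking

def oneForm (A₁ A₂ : ℂ) (X : Fin 4 → ℂ) : ℂ := X 0 + A₁ * X 2 + A₂ * X 3

def minkowski (X Y : Fin 4 → ℂ) : ℂ := -(X 1 * Y 1) + X 2 * Y 2 + X 3 * Y 3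

noncomputable def metric (V A₁ A₂ : ℂ) (X Y : Fin 4 → ℂ) : ℂ :=
  -V⁻¹ * oneForm A₁ A₂ X * oneForm A₁ A₂ Y + V * minkowski X Y

theorem metric_eq_zero {V A₁ A₂ a b : ℂ} {X Y : Fin 4 → ℂ} (hV : V ≠ 0)
    (hX : oneForm A₁ A₂ X = V * a) (hY : oneForm A₁ A₂ Y = V * b)
    (hXY : minkowski X Y = a * b) : metric V A₁ A₂ X Y = 0 := by
  rw [metric, hX, hY, hXY]
  linear_combination (-(V * a * b)) * inv_mul_cancel₀ hV

def betaVec₁ (V uz ω : ℂ) : Fin 4 → ℂ := ![-I * (V - 2 * ω * uz), -1, ω, -I * ω]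

def betaVec₂ (V uzb ω : ℂ) : Fin 4 → ℂ := ![I * (ω * V - 2 * uzb), -ω, 1, I]

section

variable (V ω ux₁ ux₂ : ℂ)

theorem oneForm_betaVec₁ :
    oneForm (-ux₂) ux₁ (betaVec₁ V ((ux₁ - I * ux₂) / 2) ω) = V * -I := by
  simp only [oneForm, betaVec₁, Matrix.cons_val]
  linear_combination (-ω * ux₂) * I_sq

theorem oneForm_betaVec₂ :
    oneForm (-ux₂) ux₁ (betaVec₂ V ((ux₁ + I * ux₂) / 2) ω) = V * (I * ω) := by
  simp only [oneForm, betaVec₂, Matrix.cons_val]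
  linear_combination (-ux₂) * I_sq

variable (uz uz' : ℂ)

theorem minkowski_betaVec₁_betaVec₁ :
    minkowski (betaVec₁ V uz ω) (betaVec₁ V uz' ω) = -I * -I := by
  simp only [minkowski, betaVec₁, Matrix.cons_val]
  linear_combination (ω ^ 2 - 1) * I_sq

theorem minkowski_betaVec₁_betaVec₂ :
    minkowski (betaVec₁ V uz ω) (betaVec₂ V uz' ω) = -I * (I * ω) := by
  simp only [minkowski, betaVec₁, betaVec₂, Matrix.cons_val]
  ring

theorem minkowski_betaVec₂_betaVec₁ :
    minkowski (betaVec₂ V uz ω) (betaVec₁ V uz' ω) = I * ω * -I := by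
  simp only [minkowski, betaVec₁, betaVec₂, Matrix.cons_val]
  ring

theorem minkowski_betaVec₂_betaVec₂ :
    minkowski (betaVec₂ V uz ω) (betaVec₂ V uz' ω) = I * ω * (I * ω) := by
  simp only [minkowski, betaVec₂, Matrix.cons_val]
  linear_combination (1 - ω ^ 2) * I_sq

end

end GibbonsHawking

open GibbonsHawking in
/-- At a point where `∂_t u ≠ 1`, with `V = 1 − ∂_t u`, `A₁ = −∂_{x₂}u`,
`A₂ = ∂_{x₁}u`, `u_z = (∂_{x₁}u − i∂_{x₂}u)/2`, `u_{z̄} = (∂_{x₁}u + i∂_{x₂}u)/2`, and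
`B` the complex-bilinear extension of the metric `g_{(V,A)}` to `ℂ⁴` (coordinates ordered
`(∂_s, ∂_t, ∂_{x₁}, ∂_{x₂})`), the vectors `μ₁ = (−i(V − 2ωu_z), −1, ω, −iω)` and
`μ₂ = (i(ωV − 2u_{z̄}), −ω, 1, i)` satisfy `B(μ_j, μ_k) = 0` for all `j,k`; in particular
their complex span is totally null for `g_{(V,A)}`. -/
theorem stmt_13 (ut ux₁ ux₂ : ℝ) (hut : ut ≠ 1)
    (V A₁ A₂ : ℝ) (hV : V = 1 - ut) (hA₁ : A₁ = -ux₂) (hA₂ : A₂ = ux₁)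
    (uz uzb : ℂ)
    (huz : uz = ((ux₁ : ℂ) - Complex.I * (ux₂ : ℂ)) / 2)
    (huzb : uzb = ((ux₁ : ℂ) + Complex.I * (ux₂ : ℂ)) / 2)
    (B : (Fin 4 → ℂ) → (Fin 4 → ℂ) → ℂ)
    (hB : ∀ X Y : Fin 4 → ℂ, B X Y =
      -(V : ℂ)⁻¹ * (X 0 + (A₁ : ℂ) * X 2 + (A₂ : ℂ) * X 3)
        * (Y 0 + (A₁ : ℂ) * Y 2 + (A₂ : ℂ) * Y 3)
      + (V : ℂ) * (-(X 1 * Y 1) + X 2 * Y 2 + X 3 * Y 3))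
    (ω : ℂ) (μ₁ μ₂ : Fin 4 → ℂ)
    (hμ₁ : μ₁ = ![-Complex.I * ((V : ℂ) - 2 * ω * uz), -1, ω, -Complex.I * ω])
    (hμ₂ : μ₂ = ![Complex.I * (ω * (V : ℂ) - 2 * uzb), -ω, 1, Complex.I]) :
    B μ₁ μ₁ = 0 ∧ B μ₁ μ₂ = 0 ∧ B μ₂ μ₁ = 0 ∧ B μ₂ μ₂ = 0 := by
  have hV₀ : (V : ℂ) ≠ 0 := by
    rw [hV]
    exact_mod_cast sub_ne_zero.mpr hut.symm
  have hBg : B = metric V (-ux₂) ux₁ := by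
    subst hA₁ hA₂
    ext X Y
    rw [hB, metric, oneForm, oneForm, minkowski, ofReal_neg]
  have hμ₁' : μ₁ = betaVec₁ V ((ux₁ - I * ux₂) / 2) ω := by rw [hμ₁, huz, betaVec₁]
  have hμ₂' : μ₂ = betaVec₂ V ((ux₁ + I * ux₂) / 2) ω := by rw [hμ₂, huzb, betaVec₂]
  have hα₁ := oneForm_betaVec₁ V ω ux₁ ux₂
  have hα₂ := oneForm_betaVec₂ V ω ux₁ ux₂
  rw [hBg, hμ₁', hμ₂']
  exact ⟨metric_eq_zero hV₀ hα₁ hα₁ (minkowski_betaVec₁_betaVec₁ ..),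
    metric_eq_zero hV₀ hα₁ hα₂ (minkowski_betaVec₁_betaVec₂ ..),
    metric_eq_zero hV₀ hα₂ hα₁ (minkowski_betaVec₂_betaVec₁ ..),
    metric_eq_zero hV₀ hα₂ hα₂ (minkowski_betaVec₂_betaVec₂ ..)⟩
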